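/- arXiv:2411.11215 — 3 statements merged into one kernel-verified Lean document; each statement's English description precedes it below -/
import Mathlib

section
/- Let Δ be a nonempty compact convex subset of ℝⁿ contained in an affine hyperplane {x : ℓ(x) = 1} for some linear functional ℓ. Then every face of conv({0} ∪ Δ) that does not contain 0 is a face of Δ, and conversely every face of Δ is a face of conv({0} ∪ Δ) not containing 0. -/
/-!
The cone `C = conv({0} ∪ Δ)` is the union of the segments `[0, z]`, `z ∈ Δ`. A face of `C` avoiding
`0` cannot meet the interior of such a segment, so it lies in `Δ`. Conversely `ℓ ≤ 1` on `C` with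
equality exactly on `Δ`, so `Δ` is itself a face of `C`, and faces of a face are faces.
-/

section

variable {𝕜 E : Type*} [Field 𝕜] [LinearOrder 𝕜] [IsStrictOrderedRing 𝕜] [AddCommGroup E]
  [Module 𝕜 E]

theorem isExtreme_setOf_eq_of_forall_le {A : Set E} (ℓ : E →ₗ[𝕜] 𝕜) {c : 𝕜}
    (hle : ∀ x ∈ A, ℓ x ≤ c) : IsExtreme 𝕜 A {x ∈ A | ℓ x = c} := by
  refine ⟨fun x hx => hx.1, ?_⟩
  rintro x hx y hy p ⟨-, hp⟩ ⟨a, b, ha, hb, hab, rfl⟩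
  have hx' := hle x hx
  have hy' := hle y hy
  simp only [map_add, map_smul, smul_eq_mul] at hp
  refine ⟨hx, le_antisymm hx' (le_of_not_gt fun hlt => ?_)⟩
  have hsum : a * (c - ℓ x) + b * (c - ℓ y) = 0 := by linear_combination c * hab - hp
  linarith [mul_pos ha (sub_pos.2 hlt), mul_nonneg hb.le (sub_nonneg.2 hy')]

theorem mem_convexHull_insert_zero {Δ : Set E} (hne : Δ.Nonempty) (hconv : Convex 𝕜 Δ) {x : E} :
    x ∈ convexHull 𝕜 (insert 0 Δ) ↔ ∃ z ∈ Δ, x ∈ segment 𝕜 0 z := by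
  rw [convexHull_insert hne, hconv.convexHull_eq, convexJoin_singleton_left, Set.mem_iUnion₂]
  simp only [exists_prop]

theorem IsExtreme.subset_of_zero_notMem {Δ F : Set E} (hne : Δ.Nonempty) (hconv : Convex 𝕜 Δ)
    (hF : IsExtreme 𝕜 (convexHull 𝕜 (insert 0 Δ)) F) (h0 : (0 : E) ∉ F) : F ⊆ Δ := by
  intro x hxF
  obtain ⟨z, hz, hxz⟩ := (mem_convexHull_insert_zero hne hconv).1 (hF.subset hxF)
  by_cases hx : x = z
  · exact hx ▸ hz
  have hx0 : x ≠ 0 := fun h => h0 (h ▸ hxF)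
  have hmem : x ∈ openSegment 𝕜 0 z :=
    mem_openSegment_of_ne_left_right (Ne.symm hx0) (Ne.symm hx) hxz
  exact absurd (hF.left_mem_of_mem_openSegment (subset_convexHull 𝕜 _ (Set.mem_insert 0 Δ))
    (subset_convexHull 𝕜 _ (Set.mem_insert_of_mem 0 hz)) hxF hmem) h0

theorem isExtreme_convexHull_insert_zero {Δ : Set E} (hne : Δ.Nonempty) (hconv : Convex 𝕜 Δ)
    (ℓ : E →ₗ[𝕜] 𝕜) (hΔ : ∀ x ∈ Δ, ℓ x = 1) : IsExtreme 𝕜 (convexHull 𝕜 (insert 0 Δ)) Δ := by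
  have hle : ∀ x ∈ convexHull 𝕜 (insert 0 Δ), ℓ x ≤ 1 := by
    refine fun x hx => convexHull_min ?_ (convex_halfSpace_le ℓ.isLinear 1) hx
    rintro y (rfl | hy)
    · simp
    · exact (hΔ y hy).le
  have hlevel : {x ∈ convexHull 𝕜 (insert 0 Δ) | ℓ x = 1} = Δ := by
    refine Set.Subset.antisymm ?_ fun x hx =>
      ⟨subset_convexHull 𝕜 _ (Set.mem_insert_of_mem 0 hx), hΔ x hx⟩
    rintro x ⟨hx, hℓx⟩
    obtain ⟨z, hz, a, b, -, -, hab, rfl⟩ := (mem_convexHull_insert_zero hne hconv).1 hx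
    simp only [smul_zero, zero_add, map_smul, smul_eq_mul, hΔ z hz, mul_one] at hℓx ⊢
    rwa [hℓx, one_smul]
  conv_rhs => rw [← hlevel]
  exact isExtreme_setOf_eq_of_forall_le ℓ hle

end

theorem stmt_1_general {n : ℕ} (Δ : Set (EuclideanSpace ℝ (Fin n)))
    (hne : Δ.Nonempty) (hconv : Convex ℝ Δ)
    (ℓ : EuclideanSpace ℝ (Fin n) →ₗ[ℝ] ℝ) (hΔ : ∀ x ∈ Δ, ℓ x = 1) :
    ∀ F : Set (EuclideanSpace ℝ (Fin n)),
      (Convex ℝ F ∧ IsExtreme ℝ (convexHull ℝ ({0} ∪ Δ)) F ∧ 0 ∉ F) ↔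
      (Convex ℝ F ∧ IsExtreme ℝ Δ F) := by
  intro F
  rw [Set.singleton_union]
  have hΔC : IsExtreme ℝ (convexHull ℝ (insert 0 Δ)) Δ :=
    isExtreme_convexHull_insert_zero hne hconv ℓ hΔ
  constructor
  · rintro ⟨hFconv, hF, h0⟩
    exact ⟨hFconv, hF.mono hΔC.subset (hF.subset_of_zero_notMem hne hconv h0)⟩
  · rintro ⟨hFconv, hF⟩
    refine ⟨hFconv, hΔC.trans hF, fun h0 => ?_⟩
    simpa using hΔ 0 (hF.subset h0)

/-- Faces of `conv({0} ∪ Δ)` not containing `0` are exactly the faces of `Δ`,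
when `Δ` is a nonempty compact convex subset of `ℝⁿ` contained in an affine
hyperplane `{x | ℓ x = 1}`. A face of a convex set `C` is a convex subset `F ⊆ C`
that is extreme in `C`. -/
theorem stmt_1 {n : ℕ} (Δ : Set (EuclideanSpace ℝ (Fin n)))
    (hne : Δ.Nonempty) (hcpt : IsCompact Δ) (hconv : Convex ℝ Δ)
    (ℓ : EuclideanSpace ℝ (Fin n) →ₗ[ℝ] ℝ) (hΔ : ∀ x ∈ Δ, ℓ x = 1) :
    ∀ F : Set (EuclideanSpace ℝ (Fin n)),
      (Convex ℝ F ∧ IsExtreme ℝ (convexHull ℝ ({0} ∪ Δ)) F ∧ 0 ∉ F) ↔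
      (Convex ℝ F ∧ IsExtreme ℝ Δ F) :=
  stmt_1_general Δ hne hconv ℓ hΔ
end

section
/- Let D be a discrete valuation ring with uniformizer λ, and let f : M → N be an injective D-linear map of D-modules such that λˢ·N ⊆ range(f) for some s ≥ 0. Then f restricts to a D-linear isomorphism from f⁻¹(λˢN) onto λˢN, and for every n ≥ 1, f induces an isomorphism f⁻¹(λˢN) / λⁿ·f⁻¹(λˢN) ≅ λˢN / λ^{n+s}N. -/
/-!
Since `f` is injective and `ϖˢN ⊆ range f`, `f` maps `f⁻¹(ϖˢN)` isomorphically onto `ϖˢN`.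
An isomorphism commutes with multiplication by `ϖⁿ`, so it carries `ϖⁿ·f⁻¹(ϖˢN)` onto
`ϖⁿ·ϖˢN = ϖ^{n+s}N`, and therefore descends to the quotients.
-/

open Pointwise

namespace Submodule

variable {R M N : Type*} [CommSemiring R] [AddCommMonoid M] [Module R M] [AddCommMonoid N]
  [Module R N]

theorem smul_top_le_iff {p : Submodule R N} {a : R} : a • ⊤ ≤ p ↔ ∀ y : N, a • y ∈ p := by
  simp only [SetLike.le_def, mem_smul_pointwise_iff_exists, mem_top, true_and,
    forall_exists_index, forall_apply_eq_imp_iff]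

theorem comap_subtype_smul (q : Submodule R N) (a : R) :
    comap q.subtype (a • q) = (a • ⊤ : Submodule R q) := by
  rw [← comap_map_eq_of_injective q.injective_subtype (a • ⊤), map_pointwise_smul, map_top,
    range_subtype]

theorem map_equiv_smul_top {P : Type*} [AddCommMonoid P] [Module R P] (e : M ≃ₗ[R] P) (a : R) :
    map (e : M →ₗ[R] P) (a • ⊤) = a • ⊤ := by
  rw [map_pointwise_smul, map_top, LinearEquiv.range]

noncomputable def comapEquivOfLeRange {f : M →ₗ[R] N} (hf : Function.Injective f)
    {q : Submodule R N} (hq : q ≤ LinearMap.range f) : comap f q ≃ₗ[R] q :=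
  (equivMapOfInjective f hf (comap f q)).trans (LinearEquiv.ofEq _ _ (map_comap_eq_self hq))

end Submodule

theorem stmt_8_general (D : Type*) [CommRing D]
    (ϖ : D)
    (M N : Type*) [AddCommGroup M] [Module D M] [AddCommGroup N] [Module D N]
    (f : M →ₗ[D] N) (hinj : Function.Injective f) (s : ℕ)
    (hs : ∀ y : N, ϖ ^ s • y ∈ LinearMap.range f) :
    (∃ e : (Submodule.comap f (ϖ ^ s • ⊤ : Submodule D N)) ≃ₗ[D]
        (ϖ ^ s • ⊤ : Submodule D N), ∀ x, (e x : N) = f x.1) ∧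
    ∀ n : ℕ, 1 ≤ n →
      ∃ e : ((Submodule.comap f (ϖ ^ s • ⊤ : Submodule D N)) ⧸
              (ϖ ^ n • ⊤ : Submodule D (Submodule.comap f (ϖ ^ s • ⊤ : Submodule D N)))) ≃ₗ[D]
            ((ϖ ^ s • ⊤ : Submodule D N) ⧸
              Submodule.comap (ϖ ^ s • ⊤ : Submodule D N).subtype
                (ϖ ^ (n + s) • ⊤ : Submodule D N)),
        ∀ x : (Submodule.comap f (ϖ ^ s • ⊤ : Submodule D N)),
          e (Submodule.Quotient.mk x) =
            Submodule.Quotient.mk (⟨f x.1, Submodule.mem_comap.mp x.2⟩ :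
              (ϖ ^ s • ⊤ : Submodule D N)) := by
  let e := Submodule.comapEquivOfLeRange hinj (Submodule.smul_top_le_iff.mpr hs)
  refine ⟨⟨e, fun _ => rfl⟩, fun n _ => ⟨Submodule.Quotient.equiv _ _ e ?_, fun _ => rfl⟩⟩
  rw [Submodule.map_equiv_smul_top, pow_add, mul_smul, Submodule.comap_subtype_smul]

/-- Let `D` be a DVR with uniformizer `ϖ`, and `f : M → N` an injective `D`-linear map
with `ϖˢ·N ⊆ range f`. Then `f` restricts to an isomorphism `f⁻¹(ϖˢN) ≃ ϖˢN`, and for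
every `n ≥ 1`, `f` induces an isomorphism `f⁻¹(ϖˢN)/ϖⁿ·f⁻¹(ϖˢN) ≅ ϖˢN/ϖ^{n+s}N`. -/
theorem stmt_8 (D : Type*) [CommRing D] [IsDomain D] [IsDiscreteValuationRing D]
    (ϖ : D) (hϖ : Irreducible ϖ)
    (M N : Type*) [AddCommGroup M] [Module D M] [AddCommGroup N] [Module D N]
    (f : M →ₗ[D] N) (hinj : Function.Injective f) (s : ℕ)
    (hs : ∀ y : N, ϖ ^ s • y ∈ LinearMap.range f) :
    (∃ e : (Submodule.comap f (ϖ ^ s • ⊤ : Submodule D N)) ≃ₗ[D]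
        (ϖ ^ s • ⊤ : Submodule D N), ∀ x, (e x : N) = f x.1) ∧
    ∀ n : ℕ, 1 ≤ n →
      ∃ e : ((Submodule.comap f (ϖ ^ s • ⊤ : Submodule D N)) ⧸
              (ϖ ^ n • ⊤ : Submodule D (Submodule.comap f (ϖ ^ s • ⊤ : Submodule D N)))) ≃ₗ[D]
            ((ϖ ^ s • ⊤ : Submodule D N) ⧸
              Submodule.comap (ϖ ^ s • ⊤ : Submodule D N).subtype
                (ϖ ^ (n + s) • ⊤ : Submodule D N)),
        ∀ x : (Submodule.comap f (ϖ ^ s • ⊤ : Submodule D N)),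
          e (Submodule.Quotient.mk x) =
            Submodule.Quotient.mk (⟨f x.1, Submodule.mem_comap.mp x.2⟩ :
              (ϖ ^ s • ⊤ : Submodule D N)) :=
  stmt_8_general D ϖ M N f hinj s hs
end

section
/- Let C be a coalgebra over a field k and M a (right) C-comodule. Then every element m ∈ M is contained in a subcomodule of M that is finite-dimensional as a k-vector space. In particular, every element of C itself lies in a finite-dimensional subcoalgebra/subcomodule. -/
/-!
The dual `C* = Module.Dual k C` is an algebra under convolution and acts on `M` by the slice maps
`φ • m = (id ⊗ φ) (ρ m)`: coassociativity gives `φ • (ψ • m) = (φ * ψ) • m`, and the counit acts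
as the identity. So the span `C* • m` contains `m`. Writing `ρ m = ∑ mᵢ ⊗ cᵢ` puts every `φ • m`
in the span of the finitely many `mᵢ`. Finally `C* • m` is a subcomodule: expanding in a basis of
`C`, an element of `M ⊗ C` lies in `N ⊗ C` once all its slices lie in `N`, and the slices of
`ρ (ψ • m)` are the elements `(φ * ψ) • m`.
-/

open TensorProduct

/-- A right coaction `ρ : M → M ⊗ C` of a coalgebra `C` on `M`, i.e. a linear map
satisfying coassociativity and the counit axiom. -/
structure IsCoaction (k C M : Type*) [Field k]
    [AddCommGroup C] [Module k C] [Coalgebra k C] [AddCommGroup M] [Module k M]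
    (ρ : M →ₗ[k] M ⊗[k] C) : Prop where
  coassoc : ∀ m : M,
    (TensorProduct.assoc k M C C) ((TensorProduct.map ρ LinearMap.id) (ρ m)) =
      (TensorProduct.map LinearMap.id Coalgebra.comul) (ρ m)
  counit : ∀ m : M,
    (TensorProduct.rid k M) ((TensorProduct.map LinearMap.id Coalgebra.counit) (ρ m)) = m

namespace TensorProduct

variable {R C M N : Type*} [CommSemiring R] [AddCommMonoid C] [Module R C]
  [AddCommMonoid M] [Module R M] [AddCommMonoid N] [Module R N]

noncomputable def rightSlice (φ : Module.Dual R C) : M ⊗[R] C →ₗ[R] M :=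
  (TensorProduct.rid R M).toLinearMap ∘ₗ φ.lTensor M

@[simp]
lemma rightSlice_tmul (φ : Module.Dual R C) (m : M) (c : C) :
    rightSlice φ (m ⊗ₜ[R] c) = φ c • m := by
  simp [rightSlice]

lemma rightSlice_rTensor (φ : Module.Dual R C) (f : M →ₗ[R] N) (t : M ⊗[R] C) :
    rightSlice φ (f.rTensor C t) = f (rightSlice φ t) := by
  induction t using TensorProduct.induction_on with
  | zero => simp
  | tmul m c => simp
  | add t u ht hu => simp [ht, hu]

lemma rightSlice_lTensor (φ : Module.Dual R C) (f : N →ₗ[R] C) (t : M ⊗[R] N) :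
    rightSlice φ (f.lTensor M t) = rightSlice (φ ∘ₗ f) t := by
  simp [rightSlice, LinearMap.lTensor_comp_apply]

lemma rightSlice_rightSlice (φ ψ : Module.Dual R C) (s : (M ⊗[R] C) ⊗[R] C) :
    rightSlice φ (rightSlice ψ s) =
      rightSlice (LinearMap.mul' R R ∘ₗ map φ ψ) (TensorProduct.assoc R M C C s) := by
  induction s using TensorProduct.induction_on with
  | zero => simp
  | tmul t c =>
    induction t using TensorProduct.induction_on with
    | zero => simp
    | tmul m d => simp [smul_smul, mul_comm]
    | add t u ht hu => simp only [add_tmul, map_add, ht, hu]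
  | add s u hs hu => simp [hs, hu]

lemma exists_finite_forall_rightSlice_mem_span (t : M ⊗[R] C) :
    ∃ s : Set M, s.Finite ∧ ∀ φ : Module.Dual R C, rightSlice φ t ∈ Submodule.span R s := by
  classical
  obtain ⟨S, rfl⟩ := exists_finset t
  refine ⟨S.image Prod.fst, Finset.finite_toSet _, fun φ => ?_⟩
  rw [map_sum]
  exact Submodule.sum_mem _ fun i hi => by
    simpa using Submodule.smul_mem _ (φ i.2)
      (Submodule.subset_span (Finset.mem_image_of_mem Prod.fst hi))

lemma mem_range_map_subtype_of_forall_rightSlice_mem [Module.Free R C] (N : Submodule R M)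
    {t : M ⊗[R] C} (h : ∀ φ : Module.Dual R C, rightSlice φ t ∈ N) :
    t ∈ LinearMap.range (map N.subtype (LinearMap.id : C →ₗ[R] C)) := by
  classical
  let b := Module.Free.chooseBasis R C
  have hN : ∀ i, equivFinsuppOfBasisRight b t i ∈ N := fun i => by
    rw [equivFinsuppOfBasisRight_apply]
    exact h (b.coord i)
  rw [← (equivFinsuppOfBasisRight b).symm_apply_apply t, equivFinsuppOfBasisRight_symm_apply]
  exact Submodule.finsuppSum_mem _ _ _ _ fun i _ => ⟨⟨_, hN i⟩ ⊗ₜ b i, rfl⟩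

end TensorProduct

section

variable {k C M : Type*} [Field k] [AddCommGroup C] [Module k C] [AddCommGroup M] [Module k M]

noncomputable def sliceSpan (ρ : M →ₗ[k] M ⊗[k] C) (m : M) : Submodule k M :=
  Submodule.span k (Set.range fun φ : Module.Dual k C => rightSlice φ (ρ m))

lemma finiteDimensional_sliceSpan (ρ : M →ₗ[k] M ⊗[k] C) (m : M) :
    FiniteDimensional k (sliceSpan ρ m) := by
  obtain ⟨s, hs, hslice⟩ := exists_finite_forall_rightSlice_mem_span (ρ m)
  have := FiniteDimensional.span_of_finite k hs
  exact Submodule.finiteDimensional_of_le (Submodule.span_le.2 (Set.range_subset_iff.2 hslice))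

variable [Coalgebra k C]

lemma isCoaction_comul : IsCoaction k C C (Coalgebra.comul (R := k)) where
  coassoc := Coalgebra.coassoc_apply
  counit c := by
    rw [← LinearMap.lTensor_def, Coalgebra.lTensor_counit_comul, rid_tmul, one_smul]

namespace IsCoaction

variable {ρ : M →ₗ[k] M ⊗[k] C}

lemma rightSlice_rightSlice (hρ : IsCoaction k C M ρ) (φ ψ : Module.Dual k C) (m : M) :
    rightSlice φ (ρ (rightSlice ψ (ρ m))) =
      rightSlice (WithConv.toConv φ * WithConv.toConv ψ).ofConv (ρ m) := by
  rw [← rightSlice_rTensor, TensorProduct.rightSlice_rightSlice, LinearMap.rTensor_def,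
    hρ.coassoc, ← LinearMap.lTensor_def, rightSlice_lTensor]
  rfl

lemma mem_sliceSpan_self (hρ : IsCoaction k C M ρ) (m : M) : m ∈ sliceSpan ρ m := by
  have h : rightSlice Coalgebra.counit (ρ m) ∈ sliceSpan ρ m := Submodule.subset_span ⟨_, rfl⟩
  rwa [show rightSlice Coalgebra.counit (ρ m) = m from hρ.counit m] at h

lemma mem_range_of_mem_sliceSpan (hρ : IsCoaction k C M ρ) {m x : M} (hx : x ∈ sliceSpan ρ m) :
    ρ x ∈ LinearMap.range (map (sliceSpan ρ m).subtype (LinearMap.id : C →ₗ[k] C)) := by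
  suffices sliceSpan ρ m ≤ (LinearMap.range (map (sliceSpan ρ m).subtype LinearMap.id)).comap ρ
    from this hx
  refine Submodule.span_le.2 (Set.range_subset_iff.2 fun ψ => ?_)
  refine mem_range_map_subtype_of_forall_rightSlice_mem _ fun φ => ?_
  rw [hρ.rightSlice_rightSlice]
  exact Submodule.subset_span ⟨_, rfl⟩

theorem exists_finiteDimensional_subcomodule (hρ : IsCoaction k C M ρ) (m : M) :
    ∃ N : Submodule k M, m ∈ N ∧ FiniteDimensional k N ∧
      ∀ x ∈ N, ρ x ∈ LinearMap.range (map N.subtype (LinearMap.id : C →ₗ[k] C)) :=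
  ⟨sliceSpan ρ m, hρ.mem_sliceSpan_self m, finiteDimensional_sliceSpan ρ m,
    fun _ => hρ.mem_range_of_mem_sliceSpan⟩

end IsCoaction

end

/-- Fundamental theorem of comodules: every element of a comodule over a coalgebra lies in
a finite-dimensional subcomodule; in particular every element of the coalgebra itself lies
in a finite-dimensional subspace stable under comultiplication. -/
theorem stmt_11 (k C M : Type*) [Field k]
    [AddCommGroup C] [Module k C] [Coalgebra k C] [AddCommGroup M] [Module k M]
    (ρ : M →ₗ[k] M ⊗[k] C) (hρ : IsCoaction k C M ρ) :
    (∀ m : M, ∃ N : Submodule k M, m ∈ N ∧ FiniteDimensional k N ∧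
      ∀ x ∈ N, ρ x ∈ LinearMap.range
        (TensorProduct.map N.subtype (LinearMap.id : C →ₗ[k] C))) ∧
    (∀ c : C, ∃ D : Submodule k C, c ∈ D ∧ FiniteDimensional k D ∧
      ∀ x ∈ D, Coalgebra.comul (R := k) x ∈ LinearMap.range
        (TensorProduct.map D.subtype (LinearMap.id : C →ₗ[k] C))) :=
  ⟨hρ.exists_finiteDimensional_subcomodule, isCoaction_comul.exists_finiteDimensional_subcomodule⟩
end
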